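/- arXiv:2602.15541 — 9 statements merged into one kernel-verified Lean document; each statement's English description precedes it below -/
import Mathlib

section
/- Let A1, A2 ⊆ ℝ be Lebesgue measurable sets of positive Lebesgue measure and let D ⊆ ℝ be dense in ℝ. Then there exists d ∈ D such that the set ((A1 + d)/2) ∩ A2 (i.e., {x ∈ A2 : 2x - d ∈ A1}) has positive Lebesgue measure. -/
/-!
Put `B = {y | 2 * y ∈ A₁}`, so that `{x ∈ A₂ | 2 * x - d ∈ A₁} = {x ∈ A₂ | x - d / 2 ∈ B}`.
By Fubini, `∫ μ {x ∈ A₂ | x - t ∈ B} dt = μ A₂ * μ B > 0`, so the integrand is positive for some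
`t`. Once `B` is shrunk to finite measure, the integrand is continuous in `t`, because the
translates of `B` vary continuously in measure; hence it is positive on a nonempty open set,
which contains `d / 2` for some `d ∈ D`.
-/

open MeasureTheory Filter Topology
open scoped ENNReal symmDiff

namespace MeasureTheory

section MeasurableGroup

variable {G : Type*} [MeasurableSpace G] [AddGroup G] [MeasurableAdd₂ G] [MeasurableNeg G]
  (μ : Measure G) [SFinite μ] [μ.IsAddLeftInvariant] [μ.IsNegInvariant]

theorem lintegral_measure_setOf_mem_sub_mem {A B : Set G} (hA : MeasurableSet A)
    (hB : MeasurableSet B) : ∫⁻ t, μ {x ∈ A | x - t ∈ B} ∂μ = μ A * μ B := by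
  have hshear : MeasurePreserving (fun p : G × G => (p.1, p.1 - p.2)) (μ.prod μ) (μ.prod μ) :=
    (MeasurePreserving.id μ).skew_product (measurable_fst.sub measurable_snd)
      (Eventually.of_forall fun x => (Measure.measurePreserving_sub_left μ x).map_eq)
  rw [← Measure.prod_prod, ← hshear.measure_preimage (hA.prod hB).nullMeasurableSet,
    Measure.prod_apply_symm (hshear.measurable (hA.prod hB))]
  rfl

theorem exists_measure_setOf_mem_sub_mem_pos {A B : Set G} (hA : MeasurableSet A)
    (hB : MeasurableSet B) (hA₀ : μ A ≠ 0) (hB₀ : μ B ≠ 0) :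
    ∃ t, 0 < μ {x ∈ A | x - t ∈ B} := by
  by_contra! h
  have hint := lintegral_measure_setOf_mem_sub_mem μ hA hB
  simp_rw [nonpos_iff_eq_zero.1 (h _), lintegral_zero] at hint
  exact mul_ne_zero hA₀ hB₀ hint.symm

end MeasurableGroup

section TopologicalGroup

variable {G : Type*} [AddGroup G] [TopologicalSpace G] [IsTopologicalAddGroup G]
  [MeasurableSpace G] [BorelSpace G] (μ : Measure G) [μ.IsAddRightInvariant]
  [μ.InnerRegularCompactLTTop] [IsLocallyFiniteMeasure μ]

theorem tendsto_measure_preimage_sub_symmDiff {B : Set G} (hB : NullMeasurableSet B μ)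
    (hμB : μ B ≠ ∞) (t₀ : G) :
    Tendsto (fun t => μ (((fun x => x - t) ⁻¹' B) ∆ ((fun x => x - t₀) ⁻¹' B)))
      (𝓝 t₀) (𝓝 0) := by
  let shift : G → C(G, G) := fun t => ⟨fun x => x - t, by fun_prop⟩
  have hshift : Continuous shift :=
    ContinuousMap.continuous_of_continuous_uncurry _ (continuous_snd.sub continuous_fst)
  simpa only [shift, ContinuousMap.coe_mk] using
    tendsto_measure_symmDiff_preimage_nhds_zero (hshift.tendsto t₀)
      (Eventually.of_forall fun t => measurePreserving_sub_right μ t)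
      (measurePreserving_sub_right μ t₀) hB hμB

theorem isOpen_setOf_measure_setOf_mem_sub_mem_pos (A : Set G) {B : Set G}
    (hB : NullMeasurableSet B μ) (hμB : μ B ≠ ∞) :
    IsOpen {t | 0 < μ {x ∈ A | x - t ∈ B}} := by
  refine isOpen_iff_mem_nhds.2 fun t₀ ht₀ => ?_
  filter_upwards [(tendsto_measure_preimage_sub_symmDiff μ hB hμB t₀).eventually_lt_const ht₀]
    with t ht
  refine pos_iff_ne_zero.2 fun h₀ => ht.not_ge ?_
  calc μ {x ∈ A | x - t₀ ∈ B}
      ≤ μ ({x ∈ A | x - t ∈ B} ∪ ((fun x => x - t) ⁻¹' B) ∆ ((fun x => x - t₀) ⁻¹' B)) := by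
        refine measure_mono fun x ⟨hxA, hxB⟩ => ?_
        by_cases hx : x - t ∈ B
        · exact Or.inl ⟨hxA, hx⟩
        · exact Or.inr (Or.inr ⟨hxB, hx⟩)
    _ ≤ μ {x ∈ A | x - t ∈ B} + μ (((fun x => x - t) ⁻¹' B) ∆ ((fun x => x - t₀) ⁻¹' B)) :=
        measure_union_le _ _
    _ = μ (((fun x => x - t) ⁻¹' B) ∆ ((fun x => x - t₀) ⁻¹' B)) := by rw [h₀, zero_add]

end TopologicalGroup

theorem Dense.exists_mem_measure_setOf_mem_sub_mem_pos {G : Type*} [AddCommGroup G]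
    [TopologicalSpace G] [IsTopologicalAddGroup G] [LocallyCompactSpace G]
    [SecondCountableTopology G] [MeasurableSpace G] [BorelSpace G] (μ : Measure G)
    [μ.IsAddHaarMeasure] {A B D : Set G} (hA : MeasurableSet A) (hB : MeasurableSet B)
    (hA₀ : μ A ≠ 0) (hB₀ : μ B ≠ 0) (hD : Dense D) :
    ∃ t ∈ D, 0 < μ {x ∈ A | x - t ∈ B} := by
  obtain ⟨B', hB'm, hB'B, hB'₀, hB'fin⟩ :=
    Measure.exists_subset_measure_lt_top hB (pos_iff_ne_zero.2 hB₀)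
  obtain ⟨t, ht, htpos⟩ := hD.exists_mem_open
    (isOpen_setOf_measure_setOf_mem_sub_mem_pos μ A hB'm.nullMeasurableSet hB'fin.ne)
    (exists_measure_setOf_mem_sub_mem_pos μ hA hB'm hA₀ hB'₀.ne')
  exact ⟨t, ht, htpos.trans_le (measure_mono fun _ hx => ⟨hx.1, hB'B hx.2⟩)⟩

end MeasureTheory

theorem stmt0 (A1 A2 D : Set ℝ) (hA1m : MeasurableSet A1) (hA2m : MeasurableSet A2)
    (h1 : 0 < volume A1) (h2 : 0 < volume A2) (hD : Dense D) :
    ∃ d ∈ D, 0 < volume {x ∈ A2 | 2 * x - d ∈ A1} := by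
  set B : Set ℝ := (fun y => 2 * y) ⁻¹' A1
  have hBm : MeasurableSet B := hA1m.preimage (by fun_prop)
  have hB₀ : volume B ≠ 0 := by
    rw [Real.volume_preimage_mul_left two_ne_zero]
    exact mul_ne_zero (by norm_num) h1.ne'
  have hhalf : Function.Surjective (· / 2 : ℝ → ℝ) := fun t => ⟨2 * t, by ring⟩
  have hD₂ : Dense ((· / 2) '' D) := hhalf.denseRange.dense_image (by fun_prop) hD
  obtain ⟨_, ⟨d, hd, rfl⟩, hpos⟩ :=
    hD₂.exists_mem_measure_setOf_mem_sub_mem_pos volume hA2m hBm h2.ne' hB₀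
  refine ⟨d, hd, hpos.trans_eq (congrArg volume (Set.ext fun x => ?_))⟩
  simp only [B, Set.mem_ofPred_eq, Set.mem_preimage, mul_sub, mul_div_cancel₀ d two_ne_zero]
end

section
/- Let I ⊆ ℝ be a nonempty interval and let H ⊆ I be a nonempty subinterval. Define H⁻ := {x ∈ I : x < inf H} and H⁺ := {x ∈ I : sup H < x}. Then H⁻ + H⁺ ⊆ H + I, where the sums denote Minkowski sums. -/
open Pointwise

theorem stmt1 (I H : Set ℝ) (hI : I.OrdConnected) (hIne : I.Nonempty)
    (hH : H.OrdConnected) (hHne : H.Nonempty) (hHI : H ⊆ I) :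
    {x ∈ I | ∀ h ∈ H, x < h} + {x ∈ I | ∀ h ∈ H, h < x} ⊆ H + I := by
  rintro z ⟨x, ⟨hxI, hx⟩, y, ⟨hyI, hy⟩, rfl⟩
  obtain ⟨h, hh⟩ := hHne
  refine ⟨h, hh, x + y - h, ?_, by ring⟩
  exact hI.out hxI hyI ⟨by linarith [hy h hh], by linarith [hx h hh]⟩
end

section
/- Let I ⊆ ℝ be a nonempty open interval, F, f1, f2, g1, g2 : I → ℝ and G defined on g1(I) + g2(I), satisfying F((x+y)/2) + f1(x) + f2(y) = G(g1(x) + g2(y)) for all x, y ∈ I. If all six functions are differentiable and F is not affine on any nonempty open subinterval of I, then g1'(x) ≠ 0 and g2'(x) ≠ 0 for every x ∈ I. -/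
/-!
If `g₁'(x₀) = 0`, differentiating the functional equation in `x` at `x₀` gives
`F'((x₀ + y)/2) / 2 + f₁'(x₀) = G'(g₁ x₀ + g₂ y) · g₁'(x₀) = 0` for every `y`, so `F'` is constant on
the interval of midpoints `(x₀ + y)/2` and `F` is affine there. The case of `g₂` is the same
argument after exchanging the two variables.
-/

open Pointwise

lemma exists_affine_of_hasDerivAt_const {s : Set ℝ} (hs : IsOpen s) (hs' : IsPreconnected s)
    {F : ℝ → ℝ} {k : ℝ} (h : ∀ x ∈ s, HasDerivAt F k x) :
    ∃ A B : ℝ, ∀ x ∈ s, F x = A * x + B := by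
  obtain ⟨B, hB⟩ := hs.exists_eq_add_of_deriv_eq hs'
    (fun x hx => (h x hx).differentiableAt.differentiableWithinAt)
    (differentiableOn_id.const_mul k) (fun x hx => by simp [(h x hx).deriv])
  exact ⟨k, B, hB⟩

lemma midpoint_mem_Ioo {a b x y : ℝ} (hx : x ∈ Set.Ioo a b) (hy : y ∈ Set.Ioo a b) :
    (x + y) / 2 ∈ Set.Ioo a b := by
  obtain ⟨hxa, hxb⟩ := hx
  obtain ⟨hya, hyb⟩ := hy
  constructor <;> linarith

lemma deriv_at_midpoint_eq_of_inner_deriv_eq_zero {a b : ℝ}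
    {F f₁ f₂ g₁ g₂ G F' f₁' g₁' G' : ℝ → ℝ}
    (hF : ∀ x ∈ Set.Ioo a b, HasDerivAt F (F' x) x)
    (hf₁ : ∀ x ∈ Set.Ioo a b, HasDerivAt f₁ (f₁' x) x)
    (hg₁ : ∀ x ∈ Set.Ioo a b, HasDerivAt g₁ (g₁' x) x)
    (hG : ∀ u ∈ g₁ '' Set.Ioo a b + g₂ '' Set.Ioo a b, HasDerivAt G (G' u) u)
    (heq : ∀ x ∈ Set.Ioo a b, ∀ y ∈ Set.Ioo a b,
      F ((x + y) / 2) + f₁ x + f₂ y = G (g₁ x + g₂ y))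
    {x₀ : ℝ} (hx₀ : x₀ ∈ Set.Ioo a b) (hg₁x₀ : g₁' x₀ = 0) {y : ℝ} (hy : y ∈ Set.Ioo a b) :
    F' ((x₀ + y) / 2) = -2 * f₁' x₀ := by
  have hlhs : HasDerivAt (fun x => F ((x + y) / 2) + f₁ x + f₂ y)
      (F' ((x₀ + y) / 2) * (1 / 2) + f₁' x₀) x₀ := by
    have hmid : HasDerivAt (fun x : ℝ => (x + y) / 2) (1 / 2) x₀ := by
      simpa using ((hasDerivAt_id x₀).add_const y).div_const 2
    exact (((hF _ (midpoint_mem_Ioo hx₀ hy)).comp x₀ hmid).add (hf₁ x₀ hx₀)).add_const _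
  have hrhs : HasDerivAt (fun x => G (g₁ x + g₂ y)) (G' (g₁ x₀ + g₂ y) * g₁' x₀) x₀ :=
    (hG _ (Set.add_mem_add ⟨x₀, hx₀, rfl⟩ ⟨y, hy, rfl⟩)).comp x₀ ((hg₁ x₀ hx₀).add_const _)
  have hlhs' : HasDerivAt (fun x => F ((x + y) / 2) + f₁ x + f₂ y)
      (G' (g₁ x₀ + g₂ y) * g₁' x₀) x₀ :=
    hrhs.congr_of_eventuallyEq <| Filter.eventually_of_mem (isOpen_Ioo.mem_nhds hx₀)
      fun x hx => heq x hx y hy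
  have := hlhs.unique hlhs'
  rw [hg₁x₀, mul_zero] at this
  linarith

lemma inner_deriv_ne_zero_of_nowhere_affine {a b : ℝ}
    {F f₁ f₂ g₁ g₂ G F' f₁' g₁' G' : ℝ → ℝ}
    (hF : ∀ x ∈ Set.Ioo a b, HasDerivAt F (F' x) x)
    (hf₁ : ∀ x ∈ Set.Ioo a b, HasDerivAt f₁ (f₁' x) x)
    (hg₁ : ∀ x ∈ Set.Ioo a b, HasDerivAt g₁ (g₁' x) x)
    (hG : ∀ u ∈ g₁ '' Set.Ioo a b + g₂ '' Set.Ioo a b, HasDerivAt G (G' u) u)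
    (heq : ∀ x ∈ Set.Ioo a b, ∀ y ∈ Set.Ioo a b,
      F ((x + y) / 2) + f₁ x + f₂ y = G (g₁ x + g₂ y))
    (hnaff : ∀ c d : ℝ, c < d → Set.Ioo c d ⊆ Set.Ioo a b →
      ¬ ∃ A B : ℝ, ∀ x ∈ Set.Ioo c d, F x = A * x + B)
    {x₀ : ℝ} (hx₀ : x₀ ∈ Set.Ioo a b) : g₁' x₀ ≠ 0 := by
  intro hg₁x₀
  obtain ⟨hx₀a, hx₀b⟩ := hx₀
  have hsub : Set.Ioo ((x₀ + a) / 2) ((x₀ + b) / 2) ⊆ Set.Ioo a b :=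
    Set.Ioo_subset_Ioo (by linarith) (by linarith)
  refine hnaff _ _ (by linarith) hsub
    (exists_affine_of_hasDerivAt_const (k := -2 * f₁' x₀) isOpen_Ioo isPreconnected_Ioo
      fun z hz => ?_)
  obtain ⟨hza, hzb⟩ := hz
  have hy : 2 * z - x₀ ∈ Set.Ioo a b := ⟨by linarith, by linarith⟩
  have hF'z := deriv_at_midpoint_eq_of_inner_deriv_eq_zero hF hf₁ hg₁ hG heq ⟨hx₀a, hx₀b⟩
    hg₁x₀ hy
  rw [show (x₀ + (2 * z - x₀)) / 2 = z by ring] at hF'z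
  exact hF'z ▸ hF z (hsub ⟨hza, hzb⟩)

theorem stmt2_general (a b : ℝ)
    (F f1 f2 g1 g2 G F' f1' f2' g1' g2' G' : ℝ → ℝ)
    (hF : ∀ x ∈ Set.Ioo a b, HasDerivAt F (F' x) x)
    (hf1 : ∀ x ∈ Set.Ioo a b, HasDerivAt f1 (f1' x) x)
    (hf2 : ∀ x ∈ Set.Ioo a b, HasDerivAt f2 (f2' x) x)
    (hg1 : ∀ x ∈ Set.Ioo a b, HasDerivAt g1 (g1' x) x)
    (hg2 : ∀ x ∈ Set.Ioo a b, HasDerivAt g2 (g2' x) x)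
    (hG : ∀ u ∈ g1 '' Set.Ioo a b + g2 '' Set.Ioo a b, HasDerivAt G (G' u) u)
    (heq : ∀ x ∈ Set.Ioo a b, ∀ y ∈ Set.Ioo a b,
      F ((x + y) / 2) + f1 x + f2 y = G (g1 x + g2 y))
    (hnaff : ∀ c d : ℝ, c < d → Set.Ioo c d ⊆ Set.Ioo a b →
      ¬ ∃ A B : ℝ, ∀ x ∈ Set.Ioo c d, F x = A * x + B) :
    ∀ x ∈ Set.Ioo a b, g1' x ≠ 0 ∧ g2' x ≠ 0 := by
  intro x₀ hx₀
  have hG_swap : ∀ u ∈ g2 '' Set.Ioo a b + g1 '' Set.Ioo a b, HasDerivAt G (G' u) u := by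
    rwa [add_comm]
  have heq_swap : ∀ x ∈ Set.Ioo a b, ∀ y ∈ Set.Ioo a b,
      F ((x + y) / 2) + f2 x + f1 y = G (g2 x + g1 y) := fun x hx y hy => by
    rw [add_comm (g2 x), ← heq y hy x hx, add_comm x y]
    ring
  exact ⟨inner_deriv_ne_zero_of_nowhere_affine hF hf1 hg1 hG heq hnaff hx₀,
    inner_deriv_ne_zero_of_nowhere_affine hF hf2 hg2 hG_swap heq_swap hnaff hx₀⟩

theorem stmt2 (a b : ℝ) (hab : a < b)
    (F f1 f2 g1 g2 G F' f1' f2' g1' g2' G' : ℝ → ℝ)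
    (hF : ∀ x ∈ Set.Ioo a b, HasDerivAt F (F' x) x)
    (hf1 : ∀ x ∈ Set.Ioo a b, HasDerivAt f1 (f1' x) x)
    (hf2 : ∀ x ∈ Set.Ioo a b, HasDerivAt f2 (f2' x) x)
    (hg1 : ∀ x ∈ Set.Ioo a b, HasDerivAt g1 (g1' x) x)
    (hg2 : ∀ x ∈ Set.Ioo a b, HasDerivAt g2 (g2' x) x)
    (hG : ∀ u ∈ g1 '' Set.Ioo a b + g2 '' Set.Ioo a b, HasDerivAt G (G' u) u)
    (heq : ∀ x ∈ Set.Ioo a b, ∀ y ∈ Set.Ioo a b,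
      F ((x + y) / 2) + f1 x + f2 y = G (g1 x + g2 y))
    (hnaff : ∀ c d : ℝ, c < d → Set.Ioo c d ⊆ Set.Ioo a b →
      ¬ ∃ A B : ℝ, ∀ x ∈ Set.Ioo c d, F x = A * x + B) :
    ∀ x ∈ Set.Ioo a b, g1' x ≠ 0 ∧ g2' x ≠ 0 :=
  stmt2_general a b F f1 f2 g1 g2 G F' f1' f2' g1' g2' G' hF hf1 hf2 hg1 hg2 hG heq hnaff
end

section
/- Let I ⊆ ℝ be a nonempty open interval and g1, g2 : I → ℝ differentiable with g1'(x)·g2'(x) > 0 for all x ∈ I. Define ψ(x) := 1/g1'(x) - 1/g2'(x). If L ⊆ I is a nonempty open subinterval such that {x ∈ L : ψ(x) ≠ 0} has Lebesgue measure zero, then ψ(x) = 0 for all x ∈ L. -/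
open MeasureTheory

theorem stmt4 (a b c d : ℝ) (hab : a < b) (hcd : c < d)
    (hsub : Set.Ioo c d ⊆ Set.Ioo a b)
    (g1 g2 g1' g2' : ℝ → ℝ)
    (hg1 : ∀ x ∈ Set.Ioo a b, HasDerivAt g1 (g1' x) x)
    (hg2 : ∀ x ∈ Set.Ioo a b, HasDerivAt g2 (g2' x) x)
    (hpos : ∀ x ∈ Set.Ioo a b, 0 < g1' x * g2' x)
    (h0 : volume {x ∈ Set.Ioo c d | 1 / g1' x - 1 / g2' x ≠ 0} = 0) :
    ∀ x ∈ Set.Ioo c d, 1 / g1' x - 1 / g2' x = 0 := by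
  intro x hx
  set f : ℝ → ℝ := fun t => g2 t - g1 t with hf
  set h : ℝ → ℝ := fun t => g2' t - g1' t with hh
  have hne : ∀ z ∈ Set.Ioo a b, g1' z ≠ 0 ∧ g2' z ≠ 0 := by
    intro z hz
    have H := hpos z hz
    constructor <;> intro hzero <;> rw [hzero] at H <;> simp at H
  have hsubset : {t | t ∈ Set.Ioo c d ∧ h t ≠ 0} ⊆
      {t ∈ Set.Ioo c d | 1 / g1' t - 1 / g2' t ≠ 0} := by
    rintro t ⟨ht, hne'⟩
    refine ⟨ht, ?_⟩
    obtain ⟨h1, h2⟩ := hne t (hsub ht)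
    intro heq
    apply hne'
    have : g1' t = g2' t := by
      field_simp at heq
      linarith
    simp [hh, this]
  have h0' : volume {t | t ∈ Set.Ioo c d ∧ h t ≠ 0} = 0 :=
    measure_mono_null hsubset h0
  have hderiv : ∀ t ∈ Set.Ioo a b, HasDerivAt f (h t) t := fun t ht =>
    (hg2 t ht).sub (hg1 t ht)
  -- f is constant on Ioo c d
  have hconst : ∀ y ∈ Set.Ioo c d, f y = f x := by
    intro y hy
    have hIcc : Set.uIcc x y ⊆ Set.Ioo c d :=
      Set.ordConnected_Ioo.uIcc_subset hx hy
    have hae : h =ᵐ[volume.restrict (Set.uIoc x y)] (fun _ => (0:ℝ)) := by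
      rw [Filter.eventuallyEq_iff_exists_mem]
      refine ⟨{t | h t = 0}, ?_, fun t ht => ht⟩
      rw [mem_ae_iff, Measure.restrict_apply' measurableSet_uIoc]
      refine measure_mono_null ?_ h0'
      intro t ⟨ht1, ht2⟩
      exact ⟨hIcc (Set.uIoc_subset_uIcc ht2), ht1⟩
    have hint : IntervalIntegrable h volume x y := by
      rw [intervalIntegrable_iff]
      exact (integrable_zero _ _ _).congr hae.symm
    have hftc := intervalIntegral.integral_eq_sub_of_hasDerivAt
      (fun t ht => hderiv t (hsub (hIcc ht))) hint
    have hzero : (∫ t in x..y, h t) = 0 := by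
      have : (∫ t in x..y, h t) = ∫ t in x..y, (0:ℝ) := by
        apply intervalIntegral.integral_congr_ae
        have := (ae_restrict_iff'₀ measurableSet_uIoc.nullMeasurableSet).mp hae
        filter_upwards [this] with t ht hmem using ht hmem
      simp [this]
    have := hftc
    rw [hzero] at this
    linarith [this]
  have hx0 : HasDerivAt f 0 x := by
    have hmem : Set.Ioo c d ∈ nhds x := isOpen_Ioo.mem_nhds hx
    have : f =ᶠ[nhds x] fun _ => f x := by
      filter_upwards [hmem] with t ht using hconst t ht
    exact (hasDerivAt_const x (f x)).congr_of_eventuallyEq this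
  have huniq : h x = 0 := hx0.unique (hderiv x (hsub hx)) |>.symm
  have heq : g1' x = g2' x := by
    have : g2' x - g1' x = 0 := huniq
    linarith
  rw [heq]
  ring
end

section
/- Let I ⊆ ℝ be a nonempty open interval and φ, ψ : I → ℝ satisfy φ((x+y)/2)(ψ(x) + ψ(y)) = φ(x)ψ(x) + φ(y)ψ(y) for all x, y ∈ I. Suppose φ is not constant on any nonempty open subinterval of I. If there exists a nonempty open subinterval L ⊆ I with ψ(x) = 0 for all x ∈ L, then ψ(x) = 0 for all x ∈ I. -/
theorem stmt7 (a b : ℝ) (hab : a < b) (φ ψ : ℝ → ℝ)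
    (heq : ∀ x ∈ Set.Ioo a b, ∀ y ∈ Set.Ioo a b,
      φ ((x + y) / 2) * (ψ x + ψ y) = φ x * ψ x + φ y * ψ y)
    (hφ : ∀ c d : ℝ, c < d → Set.Ioo c d ⊆ Set.Ioo a b →
      ¬ ∃ k : ℝ, ∀ x ∈ Set.Ioo c d, φ x = k)
    (l r : ℝ) (hlr : l < r) (hL : Set.Ioo l r ⊆ Set.Ioo a b)
    (hψL : ∀ x ∈ Set.Ioo l r, ψ x = 0) :
    ∀ x ∈ Set.Ioo a b, ψ x = 0 := by
  intro y hy
  by_contra hne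
  apply hφ ((l + y) / 2) ((r + y) / 2) (by linarith) ?_ ⟨φ y, ?_⟩
  · intro t ht
    obtain ⟨ht1, ht2⟩ := ht
    have hx : (2 * t - y) ∈ Set.Ioo l r := ⟨by linarith, by linarith⟩
    have hx' := hL hx
    constructor
    · have := hx'.1; have := hy.1; linarith
    · have := hx'.2; have := hy.2; linarith
  · intro t ht
    obtain ⟨ht1, ht2⟩ := ht
    have hx : (2 * t - y) ∈ Set.Ioo l r := ⟨by linarith, by linarith⟩
    have := heq (2 * t - y) (hL hx) y hy
    rw [hψL _ hx] at this
    have h2 : (2 * t - y + y) / 2 = t := by ring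
    rw [h2] at this
    have : (φ t - φ y) * ψ y = 0 := by ring_nf; ring_nf at this; linarith
    rcases mul_eq_zero.1 this with h | h
    · linarith [h]
    · exact absurd h hne
end

section
/- Let I ⊆ ℝ be a nonempty open interval, J ⊆ I a nonempty open subinterval, F : I → ℝ affine on J, and g1, g2 : I → ℝ continuous and strictly monotone. Suppose F, f1, f2, g1, g2, G satisfy F((x+y)/2) + f1(x) + f2(y) = G(g1(x) + g2(y)) for all x, y ∈ J. Then there exist an additive function B : ℝ → ℝ and constants β1, β2 ∈ ℝ such that f_k = -(1/2)F + B ∘ g_k + β_k on J for k = 1, 2 and G = B + β1 + β2 on g1(J) + g2(J). -/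
/-!
With `φₖ = fₖ + F/2`, affinity of `F` turns the hypothesis into the Pexider equation
`φ₁ x + φ₂ y = G (g₁ x + g₂ y)`, i.e. `G (u + v) = h₁ u + h₂ v` on `g₁(J) × g₂(J)`, a product of two
nondegenerate intervals. Normalising `G` at an interior point `(u₀, v₀)` gives a function `B₀` that
is additive near the origin; it extends to an additive `B` on `ℝ` by `B t = n B₀ (t / n)` for large
`n` (Radó–Baker). Walking from `u₀` to any `u ∈ g₁(J)` in steps shorter than the radius of local
additivity shows that `B` and `B₀` agree along the whole interval, which yields `h₁ = B + β₁`,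
and likewise `h₂ = B + β₂`.
-/

open Set Pointwise

lemma exists_pos_nat_abs_div_lt {δ : ℝ} (hδ : 0 < δ) (t : ℝ) : ∃ n : ℕ, 0 < n ∧ |t / n| < δ := by
  obtain ⟨n, hn⟩ := exists_nat_gt (|t| / δ)
  have hn₀ : (0 : ℝ) < n := (div_nonneg (abs_nonneg t) hδ.le).trans_lt hn
  refine ⟨n, by exact_mod_cast hn₀, ?_⟩
  rw [abs_div, Nat.abs_cast, div_lt_iff₀ hn₀]
  rwa [div_lt_iff₀ hδ, mul_comm] at hn

lemma Convex.exists_add_mem_of_abs_lt {S : Set ℝ} (hS : Convex ℝ S) (hS' : S.Nontrivial) :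
    ∃ p, ∃ δ > 0, ∀ t, |t| < δ → p + t ∈ S := by
  obtain ⟨x, hx, y, hy, hxy⟩ := hS'.exists_lt
  refine ⟨(x + y) / 2, (y - x) / 2, by linarith, fun t ht => hS.ordConnected.out hx hy ?_⟩
  rw [abs_lt] at ht
  constructor <;> linarith

section LocalCauchy

variable {δ : ℝ} {B₀ : ℝ → ℝ}

lemma map_natCast_mul_of_local_add (hB : ∀ s t, |s| < δ → |t| < δ → B₀ (s + t) = B₀ s + B₀ t)
    (k : ℕ) {s : ℝ} (hk : |k * s| < δ) : B₀ (k * s) = k * B₀ s := by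
  induction k with
  | zero =>
    have h₀ : |(0 : ℝ)| < δ := by simpa using hk
    have := hB 0 0 h₀ h₀
    simp only [add_zero] at this
    simp only [Nat.cast_zero, zero_mul]
    linarith
  | succ k ih =>
    have hmono : ∀ j : ℕ, j ≤ k + 1 → |j * s| ≤ |((k + 1 : ℕ) : ℝ) * s| := fun j hj => by
      rw [abs_mul, abs_mul, Nat.abs_cast, Nat.abs_cast]
      gcongr
    have hk' : |k * s| < δ := (hmono k (by omega)).trans_lt hk
    have hs : |s| < δ := by simpa using (hmono 1 (by omega)).trans_lt hk
    rw [Nat.cast_succ, add_one_mul, hB _ _ hk' hs, ih hk']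
    ring

lemma natCast_mul_apply_div_eq_of_local_add
    (hB : ∀ s t, |s| < δ → |t| < δ → B₀ (s + t) = B₀ s + B₀ t) {m n : ℕ} (hm : 0 < m) (hn : 0 < n)
    {t : ℝ} (htm : |t / m| < δ) (htn : |t / n| < δ) : m * B₀ (t / m) = n * B₀ (t / n) := by
  have hsubdivide : ∀ {m n : ℕ}, 0 < m → 0 < n → |t / m| < δ →
      m * B₀ (t / m) = (m * n : ℝ) * B₀ (t / (m * n)) := by
    intro m n hm hn htm
    have hsplit : t / m = n * (t / (m * n)) := by field_simp
    rw [hsplit] at htm ⊢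
    rw [map_natCast_mul_of_local_add hB n htm]
    ring
  rw [hsubdivide hm hn htm, hsubdivide hn hm htn, mul_comm (n : ℝ)]

theorem exists_addMonoidHom_eq_of_local_add (hδ : 0 < δ)
    (hB : ∀ s t, |s| < δ → |t| < δ → B₀ (s + t) = B₀ s + B₀ t) :
    ∃ B : ℝ →+ ℝ, ∀ t, |t| < δ → B t = B₀ t := by
  choose N hN₀ hNδ using exists_pos_nat_abs_div_lt hδ
  have hBN : ∀ (t : ℝ) (n : ℕ), 0 < n → |t / n| < δ → N t * B₀ (t / N t) = n * B₀ (t / n) :=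
    fun t n hn htn => natCast_mul_apply_div_eq_of_local_add hB (hN₀ t) hn (hNδ t) htn
  refine ⟨AddMonoidHom.mk' (fun t : ℝ => (N t : ℝ) * B₀ (t / N t)) fun u v => ?_, fun t ht => ?_⟩
  · set n := N (|u| + |v|)
    have hsmall : ∀ w, |w| ≤ |u| + |v| → |w / n| < δ := fun w hw => by
      refine lt_of_le_of_lt ?_ (hNδ (|u| + |v|))
      rw [abs_div, abs_div, abs_of_nonneg (by positivity : 0 ≤ |u| + |v|)]
      gcongr
    have hn := hN₀ (|u| + |v|)
    rw [hBN _ n hn (hsmall _ (abs_add_le u v)), hBN _ n hn (hsmall u (by simp)),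
      hBN _ n hn (hsmall v (by simp)), add_div,
      hB _ _ (hsmall u (by simp)) (hsmall v (by simp))]
    ring
  · simpa using hBN t 1 one_pos (by simpa using ht)

theorem AddMonoidHom.apply_sub_eq_of_local_add {S : Set ℝ} (hS : Convex ℝ S) {p w : ℝ}
    (hp : p ∈ S) (hw : w ∈ S) (hδ : 0 < δ) (B : ℝ →+ ℝ) (hBδ : ∀ t, |t| < δ → B t = B₀ t)
    (hadd : ∀ s t, p + s ∈ S → |t| < δ → B₀ (s + t) = B₀ s + B₀ t) :
    B (w - p) = B₀ (w - p) := by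
  obtain ⟨n, hn, hs⟩ := exists_pos_nat_abs_div_lt hδ (w - p)
  set s := (w - p) / n
  have hn' : (0 : ℝ) < n := by exact_mod_cast hn
  have hmem : ∀ k : ℕ, k ≤ n → p + k * s ∈ S := fun k hk => by
    have hkn : (k : ℝ) ≤ n := by exact_mod_cast hk
    convert hS.add_smul_sub_mem hp hw ⟨by positivity, (div_le_one hn').mpr hkn⟩ using 2
    simp only [s, smul_eq_mul]
    ring
  have hsteps : ∀ k : ℕ, k ≤ n → B (k * s) = B₀ (k * s) := by
    intro k
    induction k with
    | zero => simpa using hBδ 0 (by simpa using hδ)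
    | succ k ih =>
      intro hk
      rw [Nat.cast_succ, add_one_mul, map_add, ih (by omega), hBδ s hs,
        hadd _ _ (hmem k (by omega)) hs]
  have hns : (n : ℝ) * s = w - p := by simp only [s]; field_simp
  simpa [hns] using hsteps n le_rfl

end LocalCauchy

theorem exists_addMonoidHom_of_pexider {U V : Set ℝ} (hU : Convex ℝ U) (hV : Convex ℝ V)
    (hU' : U.Nontrivial) (hV' : V.Nontrivial) {h₁ h₂ G : ℝ → ℝ}
    (h : ∀ u ∈ U, ∀ v ∈ V, G (u + v) = h₁ u + h₂ v) :
    ∃ B : ℝ →+ ℝ, ∃ β₁ β₂ : ℝ, (∀ u ∈ U, h₁ u = B u + β₁) ∧ ∀ v ∈ V, h₂ v = B v + β₂ := by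
  obtain ⟨u₀, δ₁, hδ₁, hu₀⟩ := hU.exists_add_mem_of_abs_lt hU'
  obtain ⟨v₀, δ₂, hδ₂, hv₀⟩ := hV.exists_add_mem_of_abs_lt hV'
  have hu₀U : u₀ ∈ U := by simpa using hu₀ 0 (by simpa using hδ₁)
  have hv₀V : v₀ ∈ V := by simpa using hv₀ 0 (by simpa using hδ₂)
  set B₀ : ℝ → ℝ := fun w => G (u₀ + v₀ + w) - G (u₀ + v₀)
  have hB₀ : ∀ s t, u₀ + s ∈ U → v₀ + t ∈ V →
      B₀ (s + t) = h₁ (u₀ + s) + h₂ (v₀ + t) - (h₁ u₀ + h₂ v₀) := fun s t hs ht => by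
    simp only [B₀]
    rw [show u₀ + v₀ + (s + t) = u₀ + s + (v₀ + t) by ring, h _ hs _ ht, h _ hu₀U _ hv₀V]
  have hB₀U : ∀ u ∈ U, B₀ (u - u₀) = h₁ u - h₁ u₀ := fun u hu => by
    simpa using hB₀ (u - u₀) 0 (by simpa) (by simpa)
  have hB₀V : ∀ v ∈ V, B₀ (v - v₀) = h₂ v - h₂ v₀ := fun v hv => by
    simpa using hB₀ 0 (v - v₀) (by simpa) (by simpa)
  have hB₀_add : ∀ s t, u₀ + s ∈ U → v₀ + t ∈ V → B₀ (s + t) = B₀ s + B₀ t := by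
    intro s t hs ht
    have hs₀ := hB₀ s 0 hs (by simpa)
    have h₀t := hB₀ 0 t (by simpa) ht
    simp only [add_zero, zero_add] at hs₀ h₀t
    linarith [hB₀ s t hs ht]
  have hδ : 0 < min δ₁ δ₂ := lt_min hδ₁ hδ₂
  have hu₀' : ∀ t, |t| < min δ₁ δ₂ → u₀ + t ∈ U := fun t ht =>
    hu₀ t (ht.trans_le (min_le_left _ _))
  have hv₀' : ∀ t, |t| < min δ₁ δ₂ → v₀ + t ∈ V := fun t ht =>
    hv₀ t (ht.trans_le (min_le_right _ _))
  obtain ⟨B, hB⟩ := exists_addMonoidHom_eq_of_local_add hδ fun s t hs ht =>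
    hB₀_add s t (hu₀' s hs) (hv₀' t ht)
  refine ⟨B, h₁ u₀ - B u₀, h₂ v₀ - B v₀, fun u hu => ?_, fun v hv => ?_⟩
  · have := B.apply_sub_eq_of_local_add hU hu₀U hu hδ hB fun s t hs ht =>
      hB₀_add s t hs (hv₀' t ht)
    rw [map_sub, hB₀U u hu] at this
    linarith
  · have := B.apply_sub_eq_of_local_add hV hv₀V hv hδ hB fun s t hs ht => by
      rw [add_comm s, add_comm (B₀ s)]
      exact hB₀_add t s (hu₀' t ht) hs
    rw [map_sub, hB₀V v hv] at this
    linarith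

theorem exists_addMonoidHom_of_pexider_comp {α β : Type*} {s : Set α} {t : Set β}
    {g₁ : α → ℝ} {g₂ : β → ℝ} (hs : Convex ℝ (g₁ '' s)) (ht : Convex ℝ (g₂ '' t))
    (hs' : (g₁ '' s).Nontrivial) (ht' : (g₂ '' t).Nontrivial) {φ₁ : α → ℝ} {φ₂ : β → ℝ}
    {G : ℝ → ℝ} (h : ∀ x ∈ s, ∀ y ∈ t, φ₁ x + φ₂ y = G (g₁ x + g₂ y)) :
    ∃ B : ℝ →+ ℝ, ∃ β₁ β₂ : ℝ, (∀ x ∈ s, φ₁ x = B (g₁ x) + β₁) ∧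
      (∀ y ∈ t, φ₂ y = B (g₂ y) + β₂) ∧ ∀ w ∈ g₁ '' s + g₂ '' t, G w = B w + (β₁ + β₂) := by
  obtain ⟨_, x₀, hx₀, -⟩ := hs'.nonempty
  obtain ⟨_, y₀, hy₀, -⟩ := ht'.nonempty
  obtain ⟨B, β₁, β₂, hB₁, hB₂⟩ := exists_addMonoidHom_of_pexider hs ht hs' ht'
    (h₁ := fun u => G (u + g₂ y₀) - φ₂ y₀) (h₂ := fun v => G (g₁ x₀ + v) - φ₁ x₀) (G := G) <| by
    rintro _ ⟨x, hx, rfl⟩ _ ⟨y, hy, rfl⟩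
    linarith [h x hx y hy, h x hx y₀ hy₀, h x₀ hx₀ y hy]
  have hφ₁ : ∀ x ∈ s, φ₁ x = B (g₁ x) + β₁ := fun x hx => by
    linarith [hB₁ _ (mem_image_of_mem g₁ hx), h x hx y₀ hy₀]
  have hφ₂ : ∀ y ∈ t, φ₂ y = B (g₂ y) + β₂ := fun y hy => by
    linarith [hB₂ _ (mem_image_of_mem g₂ hy), h x₀ hx₀ y hy]
  refine ⟨B, β₁, β₂, hφ₁, hφ₂, ?_⟩
  rintro _ ⟨_, ⟨x, hx, rfl⟩, _, ⟨y, hy, rfl⟩, rfl⟩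
  rw [← h x hx y hy, map_add, hφ₁ x hx, hφ₂ y hy]
  ring

theorem stmt10_general (a b c d : ℝ) (hcd : c < d)
    (hsub : Set.Ioo c d ⊆ Set.Ioo a b)
    (F f1 f2 g1 g2 G : ℝ → ℝ)
    (hFaff : ∃ A B0 : ℝ, ∀ x ∈ Set.Ioo c d, F x = A * x + B0)
    (hg1c : ContinuousOn g1 (Set.Ioo a b))
    (hg2c : ContinuousOn g2 (Set.Ioo a b))
    (hg1m : StrictMonoOn g1 (Set.Ioo a b) ∨ StrictAntiOn g1 (Set.Ioo a b))
    (hg2m : StrictMonoOn g2 (Set.Ioo a b) ∨ StrictAntiOn g2 (Set.Ioo a b))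
    (heq : ∀ x ∈ Set.Ioo c d, ∀ y ∈ Set.Ioo c d,
      F ((x + y) / 2) + f1 x + f2 y = G (g1 x + g2 y)) :
    ∃ B : ℝ → ℝ, (∀ u v : ℝ, B (u + v) = B u + B v) ∧
      ∃ β1 β2 : ℝ,
        (∀ x ∈ Set.Ioo c d, f1 x = -(1 / 2) * F x + B (g1 x) + β1) ∧
        (∀ x ∈ Set.Ioo c d, f2 x = -(1 / 2) * F x + B (g2 x) + β2) ∧
        (∀ u ∈ g1 '' Set.Ioo c d + g2 '' Set.Ioo c d, G u = B u + (β1 + β2)) := by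
  obtain ⟨A, C, hF⟩ := hFaff
  have hmid : ∀ x ∈ Ioo c d, ∀ y ∈ Ioo c d, F ((x + y) / 2) = F x / 2 + F y / 2 := by
    intro x hx y hy
    rw [hF x hx, hF y hy, hF _ ⟨by linarith [hx.1, hy.1], by linarith [hx.2, hy.2]⟩]
    ring
  have himage : ∀ g : ℝ → ℝ, ContinuousOn g (Ioo a b) →
      (StrictMonoOn g (Ioo a b) ∨ StrictAntiOn g (Ioo a b)) →
      Convex ℝ (g '' Ioo c d) ∧ (g '' Ioo c d).Nontrivial := fun g hc hm =>
    ⟨(isPreconnected_Ioo.image g (hc.mono hsub)).convex,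
      (Ioo_infinite hcd).nontrivial.image_of_injOn
        ((hm.elim StrictMonoOn.injOn StrictAntiOn.injOn).mono hsub)⟩
  obtain ⟨hU, hU'⟩ := himage g1 hg1c hg1m
  obtain ⟨hV, hV'⟩ := himage g2 hg2c hg2m
  obtain ⟨B, β₁, β₂, h₁, h₂, hG⟩ := exists_addMonoidHom_of_pexider_comp hU hV hU' hV'
    (φ₁ := fun x => f1 x + F x / 2) (φ₂ := fun y => f2 y + F y / 2) (G := G) fun x hx y hy => by
      linarith [heq x hx y hy, hmid x hx y hy]
  refine ⟨B, map_add B, β₁, β₂, fun x hx => ?_, fun y hy => ?_, hG⟩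
  · linarith [h₁ x hx]
  · linarith [h₂ y hy]

theorem stmt10 (a b c d : ℝ) (hab : a < b) (hcd : c < d)
    (hsub : Set.Ioo c d ⊆ Set.Ioo a b)
    (F f1 f2 g1 g2 G : ℝ → ℝ)
    (hFaff : ∃ A B0 : ℝ, ∀ x ∈ Set.Ioo c d, F x = A * x + B0)
    (hg1c : ContinuousOn g1 (Set.Ioo a b))
    (hg2c : ContinuousOn g2 (Set.Ioo a b))
    (hg1m : StrictMonoOn g1 (Set.Ioo a b) ∨ StrictAntiOn g1 (Set.Ioo a b))
    (hg2m : StrictMonoOn g2 (Set.Ioo a b) ∨ StrictAntiOn g2 (Set.Ioo a b))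
    (heq : ∀ x ∈ Set.Ioo c d, ∀ y ∈ Set.Ioo c d,
      F ((x + y) / 2) + f1 x + f2 y = G (g1 x + g2 y)) :
    ∃ B : ℝ → ℝ, (∀ u v : ℝ, B (u + v) = B u + B v) ∧
      ∃ β1 β2 : ℝ,
        (∀ x ∈ Set.Ioo c d, f1 x = -(1 / 2) * F x + B (g1 x) + β1) ∧
        (∀ x ∈ Set.Ioo c d, f2 x = -(1 / 2) * F x + B (g2 x) + β2) ∧
        (∀ u ∈ g1 '' Set.Ioo c d + g2 '' Set.Ioo c d, G u = B u + (β1 + β2)) :=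
  stmt10_general a b c d hcd hsub F f1 f2 g1 g2 G hFaff hg1c hg2c hg1m hg2m heq
end

section
/- Let I ⊆ ℝ be a nonempty open interval and suppose F, f1, f2, g1, g2, G solve F((x+y)/2) + f1(x) + f2(y) = G(g1(x) + g2(y)) for all x, y in a subinterval J ⊆ I, where g1 and g2 are affine on J: g_k(x) = D(x) + δ_k with D : ℝ → ℝ an invertible additive function and δ1, δ2 ∈ ℝ. Then there exist an additive function C : ℝ → ℝ and constants γ1, γ2 ∈ ℝ such that f_k(x) = C(x) + γ_k for all x ∈ J (k = 1, 2), and G(u) = F((1/2)D⁻¹(u - δ)) + C(D⁻¹(u - δ)) + γ for all u ∈ g1(J) + g2(J), where δ = δ1 + δ2 and γ = γ1 + γ2. -/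
/-!
Since `D` is additive, `G (g1 x + g2 y) = G (D (x + y) + δ1 + δ2)` depends on `x + y` only, so
`f1 x + f2 y = H (x + y)` on `J × J`: a Pexider equation on an interval. Comparing
`(x + t) + y = x + (y + t)` shows that the increments `f1 (x + t) - f1 x` and `f2 (y + t) - f2 y`
are one and the same function `A t`, additive for small arguments. A locally additive function
extends to an additive `C` on `ℝ` by `C t = n * A (t / n)` for any `n` with `t / n` small.
-/

open Set

section LocallyAdditive

variable {r : ℝ} {A : ℝ → ℝ}

theorem apply_natCast_mul_of_add_of_abs_lt
    (hA : ∀ s t, |s| < r → |t| < r → A (s + t) = A s + A t) (k : ℕ) {u : ℝ}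
    (hku : |k * u| < r) : A (k * u) = k * A u := by
  induction k with
  | zero =>
    have h0 : |(0 : ℝ)| < r := by simpa using hku
    have := hA 0 0 h0 h0
    have hA0 : A 0 = 0 := by rw [add_zero] at this; linarith
    simp [hA0]
  | succ k ih =>
    rw [abs_mul, Nat.abs_cast, Nat.cast_succ] at hku
    have hk : |(k : ℝ) * u| < r := by rw [abs_mul, Nat.abs_cast]; linarith [abs_nonneg u]
    have hu : |u| < r := by nlinarith [abs_nonneg u, k.cast_nonneg (α := ℝ)]
    push_cast
    rw [add_one_mul, hA _ _ hk hu, ih hk]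
    ring

theorem natCast_mul_apply_div_eq_mul_apply_div
    (hA : ∀ s t, |s| < r → |t| < r → A (s + t) = A s + A t) {n m : ℕ} (hn : 0 < n) (hm : 0 < m)
    {t : ℝ} (htn : |t| < n * r) (htm : |t| < m * r) : n * A (t / n) = m * A (t / m) := by
  have refine_eq : ∀ {n m : ℕ}, 0 < n → 0 < m → |t| < n * r →
      n * A (t / n) = (n * m : ℕ) * A (t / (n * m : ℕ)) := by
    intro n m hn hm htn
    have hn' : (0 : ℝ) < n := by exact_mod_cast hn
    have hm' : (0 : ℝ) < m := by exact_mod_cast hm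
    have hsplit : t / n = m * (t / (n * m : ℕ)) := by push_cast; field_simp
    have hsmall : |(m : ℝ) * (t / (n * m : ℕ))| < r := by
      rwa [← hsplit, abs_div, Nat.abs_cast, div_lt_iff₀ hn', mul_comm]
    rw [hsplit, apply_natCast_mul_of_add_of_abs_lt hA m hsmall]
    push_cast
    ring
  rw [refine_eq hn hm htn, refine_eq hm hn htm, Nat.mul_comm]

/-- `n = ⌊|t| / r⌋₊ + 1` is the least natural number with `|t / n| < r`. -/
noncomputable def extendAdd (r : ℝ) (A : ℝ → ℝ) (t : ℝ) : ℝ :=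
  (⌊|t| / r⌋₊ + 1 : ℕ) * A (t / (⌊|t| / r⌋₊ + 1 : ℕ))

theorem abs_lt_floor_div_add_one_mul (hr : 0 < r) (t : ℝ) : |t| < (⌊|t| / r⌋₊ + 1 : ℕ) * r := by
  rw [← div_lt_iff₀ hr]
  push_cast
  exact Nat.lt_floor_add_one _

theorem extendAdd_eq (hr : 0 < r) (hA : ∀ s t, |s| < r → |t| < r → A (s + t) = A s + A t)
    {n : ℕ} (hn : 0 < n) {t : ℝ} (ht : |t| < n * r) : extendAdd r A t = n * A (t / n) :=
  natCast_mul_apply_div_eq_mul_apply_div hA (Nat.succ_pos _) hn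
    (abs_lt_floor_div_add_one_mul hr t) ht

theorem extendAdd_add (hr : 0 < r) (hA : ∀ s t, |s| < r → |t| < r → A (s + t) = A s + A t)
    (u v : ℝ) : extendAdd r A (u + v) = extendAdd r A u + extendAdd r A v := by
  set N : ℝ → ℕ := fun t => ⌊|t| / r⌋₊ + 1
  have hN : ∀ t, |t| < N t * r := abs_lt_floor_div_add_one_mul hr
  set n := N u + N v
  have hn : (0 : ℝ) < n := by positivity
  have hu : |u| < n * r := by have := hN v; push_cast [n]; nlinarith [hN u, abs_nonneg v]
  have hv : |v| < n * r := by have := hN u; push_cast [n]; nlinarith [hN v, abs_nonneg u]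
  have huv : |u + v| < n * r := by push_cast [n]; linarith [abs_add_le u v, hN u, hN v]
  have hsmall : ∀ {w : ℝ}, |w| < n * r → |w / n| < r := fun hw => by
    rwa [abs_div, Nat.abs_cast, div_lt_iff₀ hn, mul_comm]
  rw [extendAdd_eq hr hA (by positivity) hu, extendAdd_eq hr hA (by positivity) hv,
    extendAdd_eq hr hA (by positivity) huv, add_div, hA _ _ (hsmall hu) (hsmall hv)]
  ring

theorem exists_addMonoidHom_eq_of_add_of_abs_lt (hr : 0 < r)
    (hA : ∀ s t, |s| < r → |t| < r → A (s + t) = A s + A t) :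
    ∃ C : ℝ →+ ℝ, ∀ t, |t| < r → C t = A t :=
  ⟨AddMonoidHom.mk' (extendAdd r A) (extendAdd_add hr hA), fun t ht => by
    simpa using extendAdd_eq hr hA one_pos (t := t) (by simpa using ht)⟩

end LocallyAdditive

section Pexider

variable {f₁ f₂ H : ℝ → ℝ}

theorem sub_eq_sub_of_add_eq_comp_add {J : Set ℝ}
    (h : ∀ x ∈ J, ∀ y ∈ J, f₁ x + f₂ y = H (x + y)) {x y t : ℝ} (hx : x ∈ J) (hxt : x + t ∈ J)
    (hy : y ∈ J) (hyt : y + t ∈ J) : f₁ (x + t) - f₁ x = f₂ (y + t) - f₂ y := by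
  have := h _ hxt _ hy
  rw [show x + t + y = x + (y + t) by ring, ← h _ hx _ hyt] at this
  linarith

theorem exists_addMonoidHom_of_add_eq_comp_add {c d : ℝ} (hcd : c < d)
    (h : ∀ x ∈ Ioo c d, ∀ y ∈ Ioo c d, f₁ x + f₂ y = H (x + y)) :
    ∃ C : ℝ →+ ℝ, ∃ γ₁ γ₂ : ℝ,
      (∀ x ∈ Ioo c d, f₁ x = C x + γ₁) ∧ ∀ x ∈ Ioo c d, f₂ x = C x + γ₂ := by
  obtain ⟨m, r, hr, rfl, rfl⟩ : ∃ m r, 0 < r ∧ c = m - r ∧ d = m + r :=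
    ⟨(c + d) / 2, (d - c) / 2, by linarith, by ring, by ring⟩
  have hm : m ∈ Ioo (m - r) (m + r) := ⟨by linarith, by linarith⟩
  set A : ℝ → ℝ := fun t => f₂ (m + t / 2) - f₂ (m - t / 2)
  have central : ∀ {x t}, x ∈ Ioo (m - r) (m + r) → x + t ∈ Ioo (m - r) (m + r) →
      m - t / 2 ∈ Ioo (m - r) (m + r) ∧ m - t / 2 + t ∈ Ioo (m - r) (m + r) := by
    intro x t ⟨hx₁, hx₂⟩ ⟨hxt₁, hxt₂⟩
    exact ⟨⟨by linarith, by linarith⟩, ⟨by linarith, by linarith⟩⟩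
  have hA₂ : ∀ {y t}, y ∈ Ioo (m - r) (m + r) → y + t ∈ Ioo (m - r) (m + r) →
      f₂ (y + t) - f₂ y = A t := by
    intro y t hy hyt
    have hc := central hy hyt
    rw [show A t = f₂ (m - t / 2 + t) - f₂ (m - t / 2) by simp only [A]; ring_nf]
    rw [← sub_eq_sub_of_add_eq_comp_add h hc.1 hc.2 hy hyt,
      sub_eq_sub_of_add_eq_comp_add h hc.1 hc.2 hc.1 hc.2]
  have hA₁ : ∀ {x t}, x ∈ Ioo (m - r) (m + r) → x + t ∈ Ioo (m - r) (m + r) →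
      f₁ (x + t) - f₁ x = A t := by
    intro x t hx hxt
    have hc := central hx hxt
    rw [sub_eq_sub_of_add_eq_comp_add h hx hxt hc.1 hc.2, hA₂ hc.1 hc.2]
  have hAadd : ∀ s t, |s| < r → |t| < r → A (s + t) = A s + A t := by
    intro s t hs ht
    obtain ⟨hs₁, hs₂⟩ := abs_lt.mp hs
    obtain ⟨ht₁, ht₂⟩ := abs_lt.mp ht
    set x := m - (s + t) / 2 with hx_def
    have hx : x ∈ Ioo (m - r) (m + r) := ⟨by linarith, by linarith⟩
    have hxs : x + s ∈ Ioo (m - r) (m + r) := ⟨by linarith, by linarith⟩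
    have hxst : x + s + t ∈ Ioo (m - r) (m + r) := ⟨by linarith, by linarith⟩
    rw [← hA₁ hx (by rwa [← add_assoc]), ← hA₁ hx hxs, ← hA₁ hxs hxst, ← add_assoc]
    ring
  obtain ⟨C, hC⟩ := exists_addMonoidHom_eq_of_add_of_abs_lt hr hAadd
  have hCA : ∀ {x}, x ∈ Ioo (m - r) (m + r) → C x - C m = A (x - m) := fun ⟨hx₁, hx₂⟩ => by
    rw [← map_sub, hC _ (abs_lt.mpr ⟨by linarith, by linarith⟩)]
  refine ⟨C, f₁ m - C m, f₂ m - C m, fun x hx => ?_, fun x hx => ?_⟩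
  · have := hA₁ hm (t := x - m) (by rwa [add_sub_cancel])
    rw [add_sub_cancel, ← hCA hx] at this
    linarith
  · have := hA₂ hm (t := x - m) (by rwa [add_sub_cancel])
    rw [add_sub_cancel, ← hCA hx] at this
    linarith

end Pexider

open Pointwise

theorem stmt11_general (c d : ℝ) (hcd : c < d)
    (F f1 f2 g1 g2 G : ℝ → ℝ)
    (D Dinv : ℝ → ℝ)
    (hDadd : ∀ u v : ℝ, D (u + v) = D u + D v)
    (hDinv1 : ∀ x : ℝ, Dinv (D x) = x)
    (δ1 δ2 : ℝ)
    (hg1 : ∀ x ∈ Set.Ioo c d, g1 x = D x + δ1)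
    (hg2 : ∀ x ∈ Set.Ioo c d, g2 x = D x + δ2)
    (heq : ∀ x ∈ Set.Ioo c d, ∀ y ∈ Set.Ioo c d,
      F ((x + y) / 2) + f1 x + f2 y = G (g1 x + g2 y)) :
    ∃ C : ℝ → ℝ, (∀ u v : ℝ, C (u + v) = C u + C v) ∧
      ∃ γ1 γ2 : ℝ,
        (∀ x ∈ Set.Ioo c d, f1 x = C x + γ1) ∧
        (∀ x ∈ Set.Ioo c d, f2 x = C x + γ2) ∧
        (∀ u ∈ g1 '' Set.Ioo c d + g2 '' Set.Ioo c d,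
          G u = F ((1 / 2) * Dinv (u - (δ1 + δ2))) + C (Dinv (u - (δ1 + δ2))) + (γ1 + γ2)) := by
  have hg : ∀ x ∈ Ioo c d, ∀ y ∈ Ioo c d, g1 x + g2 y = D (x + y) + (δ1 + δ2) :=
    fun x hx y hy => by rw [hg1 x hx, hg2 y hy, hDadd]; ring
  have pexider : ∀ x ∈ Ioo c d, ∀ y ∈ Ioo c d,
      f1 x + f2 y = G (D (x + y) + (δ1 + δ2)) - F ((x + y) / 2) :=
    fun x hx y hy => by rw [← hg x hx y hy, ← heq x hx y hy]; ring
  obtain ⟨C, γ1, γ2, hf1, hf2⟩ := exists_addMonoidHom_of_add_eq_comp_add (f₁ := f1) (f₂ := f2)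
    (H := fun s => G (D s + (δ1 + δ2)) - F (s / 2)) hcd pexider
  refine ⟨C, C.map_add, γ1, γ2, hf1, hf2, ?_⟩
  rintro _ ⟨_, ⟨x, hx, rfl⟩, _, ⟨y, hy, rfl⟩, rfl⟩
  simp only
  rw [hg x hx y hy, add_sub_cancel_right, hDinv1, one_div_mul_eq_div, map_add]
  linarith [pexider x hx y hy, hf1 x hx, hf2 y hy]

theorem stmt11 (a b c d : ℝ) (hab : a < b) (hcd : c < d)
    (hsub : Set.Ioo c d ⊆ Set.Ioo a b)
    (F f1 f2 g1 g2 G : ℝ → ℝ)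
    (D Dinv : ℝ → ℝ)
    (hDadd : ∀ u v : ℝ, D (u + v) = D u + D v)
    (hDinv1 : ∀ x : ℝ, Dinv (D x) = x)
    (hDinv2 : ∀ y : ℝ, D (Dinv y) = y)
    (δ1 δ2 : ℝ)
    (hg1 : ∀ x ∈ Set.Ioo c d, g1 x = D x + δ1)
    (hg2 : ∀ x ∈ Set.Ioo c d, g2 x = D x + δ2)
    (heq : ∀ x ∈ Set.Ioo c d, ∀ y ∈ Set.Ioo c d,
      F ((x + y) / 2) + f1 x + f2 y = G (g1 x + g2 y)) :
    ∃ C : ℝ → ℝ, (∀ u v : ℝ, C (u + v) = C u + C v) ∧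
      ∃ γ1 γ2 : ℝ,
        (∀ x ∈ Set.Ioo c d, f1 x = C x + γ1) ∧
        (∀ x ∈ Set.Ioo c d, f2 x = C x + γ2) ∧
        (∀ u ∈ g1 '' Set.Ioo c d + g2 '' Set.Ioo c d,
          G u = F ((1 / 2) * Dinv (u - (δ1 + δ2))) + C (Dinv (u - (δ1 + δ2))) + (γ1 + γ2)) :=
  stmt11_general c d hcd F f1 f2 g1 g2 G D Dinv hDadd hDinv1 δ1 δ2 hg1 hg2 heq
end

section
/- Let I ⊆ ℝ be a nonempty open interval, g1, g2 : I → ℝ continuous and strictly monotone in the same sense, and H ⊆ I a nonempty open subinterval with a := inf H ∈ I. Then there exists x ∈ I with x < a such that H_k(x) := g_{3-k}⁻¹(g1(H) + g2(H) - g_k(x)) ∩ H is nonempty, for k = 1, 2. -/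
open Set

lemma aux13 (a b c d : ℝ) (hcd : c < d)
    (hsub : Set.Ioo c d ⊆ Set.Ioo a b)
    (g1 g2 : ℝ → ℝ)
    (hg1c : ContinuousOn g1 (Set.Ioo a b))
    (hg2c : ContinuousOn g2 (Set.Ioo a b))
    (hm1 : StrictMonoOn g1 (Set.Ioo a b))
    (hm2 : StrictMonoOn g2 (Set.Ioo a b))
    (hcI : c ∈ Set.Ioo a b) :
    ∃ x ∈ Set.Ioo a b, x < c ∧
      (∃ y ∈ Set.Ioo c d, ∃ u ∈ Set.Ioo c d, ∃ v ∈ Set.Ioo c d,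
        g2 y = g1 u + g2 v - g1 x) ∧
      (∃ y ∈ Set.Ioo c d, ∃ u ∈ Set.Ioo c d, ∃ v ∈ Set.Ioo c d,
        g1 y = g1 u + g2 v - g2 x) := by
  set m : ℝ := (c + d) / 2 with hm
  have hcm : c < m := by simp [hm]; linarith
  have hmd : m < d := by simp [hm]; linarith
  have hmcd : m ∈ Set.Ioo c d := ⟨hcm, hmd⟩
  have hmI : m ∈ Set.Ioo a b := hsub hmcd
  have hε1 : 0 < g1 m - g1 c := sub_pos.mpr (hm1 hcI hmI hcm)
  have hε2 : 0 < g2 m - g2 c := sub_pos.mpr (hm2 hcI hmI hcm)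
  -- continuity at m
  have hg1m : ContinuousAt g1 m := hg1c.continuousAt (isOpen_Ioo.mem_nhds hmI)
  have hg2m : ContinuousAt g2 m := hg2c.continuousAt (isOpen_Ioo.mem_nhds hmI)
  have hg1cc : ContinuousAt g1 c := hg1c.continuousAt (isOpen_Ioo.mem_nhds hcI)
  have hg2cc : ContinuousAt g2 c := hg2c.continuousAt (isOpen_Ioo.mem_nhds hcI)
  -- choose v ∈ (c,m) with g2 m - g2 v < (g1 m - g1 c)/2
  obtain ⟨δ1, hδ1, hδ1'⟩ := Metric.continuousAt_iff.mp hg2m ((g1 m - g1 c) / 2) (by linarith)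
  set v : ℝ := max ((c + m) / 2) (m - δ1 / 2) with hv
  have hvcm : v ∈ Set.Ioo c m := by
    constructor
    · exact lt_max_of_lt_left (by linarith)
    · apply max_lt (by linarith) (by linarith)
  have hvdist : dist v m < δ1 := by
    rw [Real.dist_eq, abs_sub_lt_iff]
    constructor
    · linarith [hvcm.2]
    · have : m - δ1 / 2 ≤ v := le_max_right _ _
      linarith
  have hv2 : g2 m - g2 v < (g1 m - g1 c) / 2 := by
    have := hδ1' hvdist
    rw [Real.dist_eq, abs_sub_lt_iff] at this
    linarith [this.2]
  have hvI : v ∈ Set.Ioo a b := hsub ⟨hvcm.1, hvcm.2.trans hmd⟩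
  have hv2pos : 0 < g2 m - g2 v := sub_pos.mpr (hm2 hvI hmI hvcm.2)
  -- choose u' ∈ (c,m) with g1 m - g1 u' < (g2 m - g2 c)/2
  obtain ⟨δ2, hδ2, hδ2'⟩ := Metric.continuousAt_iff.mp hg1m ((g2 m - g2 c) / 2) (by linarith)
  set u' : ℝ := max ((c + m) / 2) (m - δ2 / 2) with hu'
  have hu'cm : u' ∈ Set.Ioo c m := by
    constructor
    · exact lt_max_of_lt_left (by linarith)
    · apply max_lt (by linarith) (by linarith)
  have hu'dist : dist u' m < δ2 := by
    rw [Real.dist_eq, abs_sub_lt_iff]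
    constructor
    · linarith [hu'cm.2]
    · have : m - δ2 / 2 ≤ u' := le_max_right _ _
      linarith
  have hu'2 : g1 m - g1 u' < (g2 m - g2 c) / 2 := by
    have := hδ2' hu'dist
    rw [Real.dist_eq, abs_sub_lt_iff] at this
    linarith [this.2]
  have hu'I : u' ∈ Set.Ioo a b := hsub ⟨hu'cm.1, hu'cm.2.trans hmd⟩
  have hu'2pos : 0 < g1 m - g1 u' := sub_pos.mpr (hm1 hu'I hmI hu'cm.2)
  -- choose x ∈ (a,c) close to c
  obtain ⟨δ3, hδ3, hδ3'⟩ := Metric.continuousAt_iff.mp hg1cc (g2 m - g2 v) hv2pos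
  obtain ⟨δ4, hδ4, hδ4'⟩ := Metric.continuousAt_iff.mp hg2cc (g1 m - g1 u') hu'2pos
  set δ : ℝ := min δ3 δ4 with hδdef
  have hδpos : 0 < δ := lt_min hδ3 hδ4
  set x : ℝ := max ((a + c) / 2) (c - δ / 2) with hx
  have hac : a < c := hcI.1
  have hxac : x ∈ Set.Ioo a c := by
    constructor
    · exact lt_max_of_lt_left (by linarith)
    · apply max_lt (by linarith) (by linarith)
  have hxI : x ∈ Set.Ioo a b := ⟨hxac.1, hxac.2.trans hcI.2⟩
  have hxdist : dist x c < δ := by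
    rw [Real.dist_eq, abs_sub_lt_iff]
    constructor
    · linarith [hxac.2]
    · have : c - δ / 2 ≤ x := le_max_right _ _
      linarith
  have hx1 : |g1 x - g1 c| < g2 m - g2 v := hδ3' (hxdist.trans_le (min_le_left _ _))
  have hx2 : |g2 x - g2 c| < g1 m - g1 u' := hδ4' (hxdist.trans_le (min_le_right _ _))
  rw [abs_sub_lt_iff] at hx1 hx2
  have hxc1 : g1 x < g1 c := hm1 hxI hcI hxac.2
  have hxc2 : g2 x < g2 c := hm2 hxI hcI hxac.2
  refine ⟨x, hxI, hxac.2, ?_, ?_⟩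
  · -- first equation: find u ∈ (c,m) with g1 u = g1 x + g2 m - g2 v
    have hcont : ContinuousOn g1 (Set.Icc c m) := hg1c.mono (fun t ht =>
      ⟨hcI.1.trans_le ht.1, lt_of_le_of_lt ht.2 hmI.2⟩)
    have hival := intermediate_value_Ioo (le_of_lt hcm) hcont
    have htarget : g1 x + g2 m - g2 v ∈ Set.Ioo (g1 c) (g1 m) := by
      constructor <;> [linarith [hx1.2]; linarith [hv2]]
    obtain ⟨u, hu, hgu⟩ := hival htarget
    exact ⟨m, hmcd, u, ⟨hu.1, hu.2.trans hmd⟩, v, ⟨hvcm.1, hvcm.2.trans hmd⟩, by linarith⟩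
  · -- second: find v' ∈ (c,m) with g2 v' = g2 x + g1 m - g1 u'
    have hcont : ContinuousOn g2 (Set.Icc c m) := hg2c.mono (fun t ht =>
      ⟨hcI.1.trans_le ht.1, lt_of_le_of_lt ht.2 hmI.2⟩)
    have hival := intermediate_value_Ioo (le_of_lt hcm) hcont
    have htarget : g2 x + g1 m - g1 u' ∈ Set.Ioo (g2 c) (g2 m) := by
      constructor <;> [linarith [hx2.2]; linarith [hu'2]]
    obtain ⟨v', hv', hgv'⟩ := hival htarget
    exact ⟨m, hmcd, u', ⟨hu'cm.1, hu'cm.2.trans hmd⟩, v', ⟨hv'.1, hv'.2.trans hmd⟩, by linarith⟩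

theorem stmt13 (a b c d : ℝ) (hab : a < b) (hcd : c < d)
    (hsub : Set.Ioo c d ⊆ Set.Ioo a b)
    (g1 g2 : ℝ → ℝ)
    (hg1c : ContinuousOn g1 (Set.Ioo a b))
    (hg2c : ContinuousOn g2 (Set.Ioo a b))
    (hmono : (StrictMonoOn g1 (Set.Ioo a b) ∧ StrictMonoOn g2 (Set.Ioo a b)) ∨
             (StrictAntiOn g1 (Set.Ioo a b) ∧ StrictAntiOn g2 (Set.Ioo a b)))
    (hcI : c ∈ Set.Ioo a b) :
    ∃ x ∈ Set.Ioo a b, x < c ∧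
      (∃ y ∈ Set.Ioo c d, ∃ u ∈ Set.Ioo c d, ∃ v ∈ Set.Ioo c d,
        g2 y = g1 u + g2 v - g1 x) ∧
      (∃ y ∈ Set.Ioo c d, ∃ u ∈ Set.Ioo c d, ∃ v ∈ Set.Ioo c d,
        g1 y = g1 u + g2 v - g2 x) := by
  rcases hmono with ⟨hm1, hm2⟩ | ⟨ha1, ha2⟩
  · exact aux13 a b c d hcd hsub g1 g2 hg1c hg2c hm1 hm2 hcI
  · have hm1 : StrictMonoOn (fun t => -g1 t) (Set.Ioo a b) :=
      fun s hs t ht hst => neg_lt_neg (ha1 hs ht hst)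
    have hm2 : StrictMonoOn (fun t => -g2 t) (Set.Ioo a b) :=
      fun s hs t ht hst => neg_lt_neg (ha2 hs ht hst)
    obtain ⟨x, hxI, hxc, ⟨y1, hy1, u1, hu1, v1, hv1, he1⟩, ⟨y2, hy2, u2, hu2, v2, hv2, he2⟩⟩ :=
      aux13 a b c d hcd hsub (fun t => -g1 t) (fun t => -g2 t) hg1c.neg hg2c.neg hm1 hm2 hcI
    have he1' : -g2 y1 = -g1 u1 + -g2 v1 - -g1 x := he1
    have he2' : -g1 y2 = -g1 u2 + -g2 v2 - -g2 x := he2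
    exact ⟨x, hxI, hxc, ⟨y1, hy1, u1, hu1, v1, hv1, by linarith⟩,
      ⟨y2, hy2, u2, hu2, v2, hv2, by linarith⟩⟩
end

section
/- Let I ⊆ ℝ be a nonempty open interval and g : I → ℝ differentiable with g'(x) ≠ 0 for all x ∈ I. Suppose there exists ε > 0 such that for every h with 0 < h < ε and every x ∈ I with x - h ∈ I and x + h ∈ I, one has g'(x + h) = g'(x - h). Then g' is constant on I. -/
theorem stmt18 (a b : ℝ) (hab : a < b) (g g' : ℝ → ℝ)
    (hg : ∀ x ∈ Set.Ioo a b, HasDerivAt g (g' x) x)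
    (hg'ne : ∀ x ∈ Set.Ioo a b, g' x ≠ 0)
    (ε : ℝ) (hε : 0 < ε)
    (hsym : ∀ h : ℝ, 0 < h → h < ε → ∀ x : ℝ,
      x - h ∈ Set.Ioo a b → x + h ∈ Set.Ioo a b → g' (x + h) = g' (x - h)) :
    ∀ x ∈ Set.Ioo a b, ∀ y ∈ Set.Ioo a b, g' x = g' y := by
  -- Key lemma: points of Ioo a b within distance 2ε have the same g'.
  have key : ∀ u ∈ Set.Ioo a b, ∀ v ∈ Set.Ioo a b, |u - v| < 2 * ε → g' u = g' v := by
    have aux : ∀ u ∈ Set.Ioo a b, ∀ v ∈ Set.Ioo a b, u < v → v - u < 2 * ε → g' u = g' v := by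
      intro u hu v hv huv hd
      have h1 : 0 < (v - u) / 2 := by linarith
      have h2 : (v - u) / 2 < ε := by linarith
      have := hsym ((v - u) / 2) h1 h2 ((u + v) / 2) (by
        have : (u + v) / 2 - (v - u) / 2 = u := by ring
        rw [this]; exact hu) (by
        have : (u + v) / 2 + (v - u) / 2 = v := by ring
        rw [this]; exact hv)
      have e1 : (u + v) / 2 + (v - u) / 2 = v := by ring
      have e2 : (u + v) / 2 - (v - u) / 2 = u := by ring
      rw [e1, e2] at this
      exact this.symm
    intro u hu v hv hd
    rcases lt_trichotomy u v with h | h | h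
    · exact aux u hu v hv h (by rw [abs_sub_lt_iff] at hd; linarith)
    · rw [h]
    · exact (aux v hv u hu h (by rw [abs_sub_lt_iff] at hd; linarith)).symm
  intro x hx y hy
  -- Open sets where g' agrees / disagrees with g' x
  set U : Set ℝ := ⋃ t ∈ {t | t ∈ Set.Ioo a b ∧ g' t = g' x}, Metric.ball t (2 * ε) with hU
  set V : Set ℝ := ⋃ t ∈ {t | t ∈ Set.Ioo a b ∧ g' t ≠ g' x}, Metric.ball t (2 * ε) with hV
  have hUopen : IsOpen U := isOpen_biUnion fun _ _ => Metric.isOpen_ball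
  have hVopen : IsOpen V := isOpen_biUnion fun _ _ => Metric.isOpen_ball
  have h2ε : (0:ℝ) < 2 * ε := by linarith
  have hmem : ∀ t ∈ Set.Ioo a b, t ∈ U ∪ V := by
    intro t ht
    by_cases h : g' t = g' x
    · exact Or.inl (Set.mem_biUnion ⟨ht, h⟩ (Metric.mem_ball_self h2ε))
    · exact Or.inr (Set.mem_biUnion ⟨ht, h⟩ (Metric.mem_ball_self h2ε))
  have hpre : IsPreconnected (Set.Ioo a b) := (isPreconnected_Ioo)
  by_cases hyV : y ∈ V
  · -- derive a contradiction via preconnectedness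
    exfalso
    have hxU : x ∈ U := Set.mem_biUnion ⟨hx, rfl⟩ (Metric.mem_ball_self h2ε)
    obtain ⟨p, hpI, hpU, hpV⟩ := hpre U V hUopen hVopen hmem ⟨x, hx, hxU⟩ ⟨y, hy, hyV⟩
    obtain ⟨t, ⟨htI, hteq⟩, htp⟩ := Set.mem_iUnion₂.mp hpU
    obtain ⟨s, ⟨hsI, hsne⟩, hsp⟩ := Set.mem_iUnion₂.mp hpV
    have h1 : g' p = g' t := key p hpI t htI (by
      rw [Metric.mem_ball, Real.dist_eq] at htp
      exact htp)
    have h2 : g' p = g' s := key p hpI s hsI (by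
      rw [Metric.mem_ball, Real.dist_eq] at hsp
      exact hsp)
    exact hsne (h2.symm.trans (h1.trans hteq))
  · have hyU : y ∈ U := (hmem y hy).resolve_right hyV
    obtain ⟨t, ⟨htI, hteq⟩, htp⟩ := Set.mem_iUnion₂.mp hyU
    have : g' y = g' t := key y hy t htI (by
      rw [Metric.mem_ball, Real.dist_eq] at htp
      exact htp)
    rw [this, hteq]
end
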